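/- Stability of order 1 of the discrete state variable: Let U, Ū ∈ (ℝ^m)^{N+1}. Then there exists a constant C₁ ≥ 0 such that for every real ε with |ε| < 1 and every k = 0,…,N, ‖Q^{U+εŪ}_k − Q^{U}_k‖ ≤ C₁ |ε|. -/

import Mathlib

/-!
The errors `e_k = Q^{U+εŪ}_k − Q^U_k` start at `e_0 = 0` and satisfy a discrete Caputo equation
whose right-hand side differs from the unperturbed one by `O(|ε|)`: the control enters through the
`C¹` map `f`, Lipschitz on the compact segment `ε ∈ [-1, 1]`. Since `α_0 = 1` and `|α_r| ≤ 1`,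
solving the scheme for its last term gives
`‖e_k‖ ≤ h^α (M ‖e_k‖ + K |ε|) + ∑_{j<k} ‖e_j‖`; the smallness `2 h^α M < 1` absorbs the `‖e_k‖`
on the right, and a discrete Grönwall inequality yields `‖e_k‖ ≤ 2 h^α K 3^k |ε|`.
-/

open Finset Filter
open scoped RealInnerProductSpace Topology

noncomputable section

/-- `ℝ^n` with the euclidean norm. -/
abbrev Euc (n : ℕ) : Type := EuclideanSpace ℝ (Fin n)

/-- The Grünwald–Letnikov coefficients `α_r = (−α)(1−α)⋯(r−1−α)/r!`, with `α_0 = 1`. -/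
def glCoef (α : ℝ) (r : ℕ) : ℝ :=
  (∏ i ∈ Finset.range r, ((i : ℝ) - α)) / (Nat.factorial r : ℝ)

/-- Left discrete fractional derivative `(Δ^α_− G)_k = h^{−α} ∑_{r=0}^{k} α_r G_{k−r}`. -/
def dMinus {n : ℕ} (α h : ℝ) (G : ℕ → Euc n) (k : ℕ) : Euc n :=
  (h ^ (-α)) • ∑ r ∈ Finset.range (k + 1), glCoef α r • G (k - r)

/-- Right discrete fractional derivative `(Δ^α_+ G)_k = h^{−α} ∑_{r=0}^{N−k} α_r G_{k+r}`. -/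
def dPlus {n : ℕ} (N : ℕ) (α h : ℝ) (G : ℕ → Euc n) (k : ℕ) : Euc n :=
  (h ^ (-α)) • ∑ r ∈ Finset.range (N - k + 1), glCoef α r • G (k + r)

/-- Left Caputo discrete fractional derivative `(ᶜΔ^α_− G)_k = h^{−α} ∑_{r=0}^{k} α_r (G_{k−r} − G_0)`. -/
def cdMinus {n : ℕ} (α h : ℝ) (G : ℕ → Euc n) (k : ℕ) : Euc n :=
  dMinus α h (fun j => G j - G 0) k

/-- Right Caputo discrete fractional derivative
`(ᶜΔ^α_+ G)_k = h^{−α} ∑_{r=0}^{N−k} α_r (G_{k+r} − G_N)`. -/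
def cdPlus {n : ℕ} (N : ℕ) (α h : ℝ) (G : ℕ → Euc n) (k : ℕ) : Euc n :=
  dPlus N α h (fun j => G j - G N) k

lemma abs_glCoef_le_one {α : ℝ} (hα : |α| ≤ 1) (r : ℕ) : |glCoef α r| ≤ 1 := by
  have hfac : (0 : ℝ) < r.factorial := by exact_mod_cast r.factorial_pos
  rw [glCoef, abs_div, abs_of_pos hfac, div_le_one hfac, abs_prod,
    ← prod_range_add_one_eq_factorial, Nat.cast_prod]
  gcongr with i
  calc |(i : ℝ) - α| ≤ |(i : ℝ)| + |α| := abs_sub _ _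
    _ ≤ ((i + 1 : ℕ) : ℝ) := by push_cast; rw [Nat.abs_cast]; linarith

lemma glCoef_zero (α : ℝ) : glCoef α 0 = 1 := by simp [glCoef]

lemma dMinus_eq_smul_add_sum {n : ℕ} (α h : ℝ) (G : ℕ → Euc n) (k : ℕ) :
    dMinus α h G k = h ^ (-α) • (G k + ∑ j ∈ range k, glCoef α (k - j) • G j) := by
  rw [dMinus, ← sum_range_reflect (fun r => glCoef α r • G (k - r)), sum_range_succ, add_comm]
  simp only [add_tsub_cancel_right, tsub_self, glCoef_zero, one_smul, tsub_zero]
  congr 2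
  refine sum_congr rfl fun j hj => ?_
  have hjk : j < k := mem_range.mp hj
  rw [show k - (k - j) = j by omega]

lemma cdMinus_sub {n : ℕ} (α h : ℝ) (F G : ℕ → Euc n) (k : ℕ) :
    cdMinus α h (fun j => F j - G j) k = cdMinus α h F k - cdMinus α h G k := by
  simp only [cdMinus, dMinus, ← smul_sub, ← sum_sub_distrib]
  congr 1
  refine sum_congr rfl fun r _ => ?_
  congr 1
  abel

lemma norm_le_rpow_mul_norm_cdMinus_add_sum {n : ℕ} {α h : ℝ} {G : ℕ → Euc n} (hG : G 0 = 0)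
    (hh : 0 < h) (hα : |α| ≤ 1) (k : ℕ) :
    ‖G k‖ ≤ h ^ α * ‖cdMinus α h G k‖ + ∑ j ∈ range k, ‖G j‖ := by
  have hcd : cdMinus α h G k = h ^ (-α) • (G k + ∑ j ∈ range k, glCoef α (k - j) • G j) := by
    simp only [cdMinus, hG, sub_zero]
    exact dMinus_eq_smul_add_sum α h G k
  have hGk : G k = h ^ α • cdMinus α h G k - ∑ j ∈ range k, glCoef α (k - j) • G j := by
    rw [hcd, smul_smul, ← Real.rpow_add hh, add_neg_cancel, Real.rpow_zero, one_smul,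
      add_sub_cancel_right]
  calc ‖G k‖ ≤ ‖h ^ α • cdMinus α h G k‖ + ‖∑ j ∈ range k, glCoef α (k - j) • G j‖ :=
        hGk ▸ norm_sub_le _ _
    _ ≤ h ^ α * ‖cdMinus α h G k‖ + ∑ j ∈ range k, ‖G j‖ := by
        rw [norm_smul, Real.norm_of_nonneg (by positivity)]
        gcongr
        refine (norm_sum_le _ _).trans (sum_le_sum fun j _ => ?_)
        rw [norm_smul, Real.norm_eq_abs]
        exact mul_le_of_le_one_left (norm_nonneg _) (abs_glCoef_le_one hα _)

lemma norm_sub_le_of_cdMinus_eq {n : ℕ} {α h M : ℝ} {Q P : ℕ → Euc n} {φ ψ : Euc n → Euc n}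
    {k : ℕ} (h0 : Q 0 = P 0) (hh : 0 < h) (hα : |α| ≤ 1) (hsmall : 2 * h ^ α * M < 1)
    (hQ : cdMinus α h Q k = φ (Q k)) (hP : cdMinus α h P k = ψ (P k))
    (hφ : ‖φ (Q k) - φ (P k)‖ ≤ M * ‖Q k - P k‖) :
    ‖Q k - P k‖ ≤ 2 * h ^ α * ‖φ (P k) - ψ (P k)‖ + 2 * ∑ j ∈ range k, ‖Q j - P j‖ := by
  have hstep := norm_le_rpow_mul_norm_cdMinus_add_sum (G := fun j => Q j - P j)
    (sub_eq_zero.mpr h0) hh hα k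
  rw [cdMinus_sub, hQ, hP] at hstep
  have hrhs : ‖φ (Q k) - ψ (P k)‖ ≤ M * ‖Q k - P k‖ + ‖φ (P k) - ψ (P k)‖ :=
    (norm_sub_le_norm_sub_add_norm_sub _ _ _).trans (by gcongr)
  have hhα : 0 ≤ h ^ α := by positivity
  have habsorb : 0 ≤ (1 - 2 * h ^ α * M) * ‖Q k - P k‖ :=
    mul_nonneg (by linarith) (norm_nonneg _)
  nlinarith [mul_le_mul_of_nonneg_left hrhs hhα]

lemma le_mul_one_add_pow_of_le_add_mul_sum {x : ℕ → ℝ} {B L : ℝ} {N : ℕ} (hL : 0 ≤ L)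
    (hx : ∀ k ≤ N, x k ≤ B + L * ∑ j ∈ range k, x j) :
    ∀ k ≤ N, x k ≤ B * (1 + L) ^ k := by
  suffices hS : ∀ k ≤ N, B + L * ∑ j ∈ range k, x j ≤ B * (1 + L) ^ k from
    fun k hk => (hx k hk).trans (hS k hk)
  intro k
  induction k with
  | zero => simp
  | succ k ih =>
    intro hk
    have hxk := hx k (by omega)
    have hSk := ih (by omega)
    calc B + L * ∑ j ∈ range (k + 1), x j
        = (B + L * ∑ j ∈ range k, x j) + L * x k := by rw [sum_range_succ]; ring
      _ ≤ (1 + L) * (B + L * ∑ j ∈ range k, x j) := by nlinarith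
      _ ≤ (1 + L) * (B * (1 + L) ^ k) := by gcongr
      _ = B * (1 + L) ^ (k + 1) := by ring

lemma exists_forall_norm_sub_le_mul_abs {E : Type*} [NormedAddCommGroup E] [NormedSpace ℝ E]
    {g : ℕ → ℝ → E} (hg : ∀ k, ContDiff ℝ 1 (g k)) (N : ℕ) :
    ∃ C ≥ (0 : ℝ), ∀ k ≤ N, ∀ ε : ℝ, |ε| ≤ 1 → ‖g k ε - g k 0‖ ≤ C * |ε| := by
  choose K hK using fun k => (hg k).contDiffOn.exists_lipschitzOnWith one_ne_zero
    (convex_Icc (-1 : ℝ) 1) isCompact_Icc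
  refine ⟨∑ k ∈ range (N + 1), (K k : ℝ), by positivity, fun k hk ε hε => ?_⟩
  calc ‖g k ε - g k 0‖ ≤ K k * ‖ε - 0‖ :=
        (hK k).norm_sub_le (abs_le.mp hε) (by norm_num)
    _ ≤ (∑ k ∈ range (N + 1), (K k : ℝ)) * |ε| := by
        rw [sub_zero, Real.norm_eq_abs]
        gcongr
        exact single_le_sum (f := fun k => (K k : ℝ)) (fun _ _ => NNReal.coe_nonneg _)
          (mem_range.mpr (by omega))

lemma add_mul_div_mem_Icc {a b : ℝ} (hab : a ≤ b) {j N : ℕ} (hj : j ≤ N) :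
    a + j * ((b - a) / N) ∈ Set.Icc a b := by
  have hjN : (j : ℝ) / N ≤ 1 := div_le_one_of_le₀ (by exact_mod_cast hj) (Nat.cast_nonneg N)
  rw [← mul_div_assoc, mul_div_right_comm]
  constructor <;> nlinarith [div_nonneg (Nat.cast_nonneg j) (Nat.cast_nonneg N : (0 : ℝ) ≤ N)]

lemma contDiff_apply_add_smul {E F G : Type*} [NormedAddCommGroup E] [NormedSpace ℝ E]
    [NormedAddCommGroup F] [NormedSpace ℝ F] [NormedAddCommGroup G] [NormedSpace ℝ G]
    {n : WithTop ℕ∞} {f : E → F → ℝ → G}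
    (hf : ContDiff ℝ n fun p : E × F × ℝ => f p.1 p.2.1 p.2.2) (x : E) (u v : F) (t : ℝ) :
    ContDiff ℝ n fun ε : ℝ => f x (u + ε • v) t :=
  hf.comp (show ContDiff ℝ n fun ε : ℝ => (x, u + ε • v, t) by fun_prop)

theorem stability_order_one_general
    (d m N : ℕ)
    (a b : ℝ) (hab : a < b) (α : ℝ) (hα : 0 < α) (hα1 : α ≤ 1)
    (A : Euc d)
    (f : Euc d → Euc m → ℝ → Euc d)
    (hf : ContDiff ℝ 2 fun p : Euc d × Euc m × ℝ => f p.1 p.2.1 p.2.2)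
    (M : ℝ)
    (hLip : ∀ (x₁ x₂ : Euc d) (v : Euc m), ∀ t ∈ Set.Icc a b,
      ‖f x₁ v t - f x₂ v t‖ ≤ M * ‖x₁ - x₂‖)
    (hMsmall : 2 * ((b - a) / (N : ℝ)) ^ α * M < 1)
    -- `SQ V` is the discrete state variable associated to the discrete control `V`
    (SQ : (ℕ → Euc m) → ℕ → Euc d)
    (hSQ : ∀ V : ℕ → Euc m, SQ V 0 = A ∧ ∀ k, 1 ≤ k → k ≤ N →
      cdMinus α ((b - a) / (N : ℝ)) (SQ V) k
        = f (SQ V k) (V k) (a + (k : ℝ) * ((b - a) / (N : ℝ))))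
    (U Ubar : ℕ → Euc m) :
    ∃ C₁ ≥ (0 : ℝ), ∀ ε : ℝ, |ε| < 1 → ∀ k ≤ N,
      ‖SQ (fun j => U j + ε • Ubar j) k - SQ U k‖ ≤ C₁ * |ε| := by
  set h : ℝ := (b - a) / (N : ℝ)
  have hh0 : 0 ≤ h := div_nonneg (by linarith) (Nat.cast_nonneg N)
  obtain ⟨K, hK0, hK⟩ := exists_forall_norm_sub_le_mul_abs
    (fun k => (contDiff_apply_add_smul hf (SQ U k) (U k) (Ubar k) (a + k * h)).of_le one_le_two) N
  refine ⟨2 * h ^ α * K * 3 ^ N, by positivity, fun ε hε k hk => ?_⟩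
  set e : ℕ → ℝ := fun j => ‖SQ (fun j => U j + ε • Ubar j) j - SQ U j‖
  have hstep : ∀ j ≤ N, e j ≤ 2 * h ^ α * K * |ε| + 2 * ∑ i ∈ range j, e i := by
    intro j hj
    rcases j.eq_zero_or_pos with rfl | hj0
    · simp only [e, (hSQ _).1, sub_self, norm_zero, range_zero, sum_empty, mul_zero, add_zero]
      positivity
    have hh : 0 < h := div_pos (by linarith) (by norm_cast; omega)
    calc e j ≤ 2 * h ^ α * ‖f (SQ U j) (U j + ε • Ubar j) (a + j * h)
            - f (SQ U j) (U j) (a + j * h)‖ + 2 * ∑ i ∈ range j, e i :=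
          norm_sub_le_of_cdMinus_eq (φ := fun x => f x (U j + ε • Ubar j) (a + j * h))
            (ψ := fun x => f x (U j) (a + j * h)) ((hSQ _).1.trans (hSQ U).1.symm) hh
            (abs_le.mpr ⟨by linarith, hα1⟩) hMsmall ((hSQ _).2 j hj0 hj) ((hSQ U).2 j hj0 hj)
            (hLip _ _ _ _ (add_mul_div_mem_Icc hab.le hj))
      _ ≤ 2 * h ^ α * (K * |ε|) + 2 * ∑ i ∈ range j, e i := by
          gcongr
          simpa using hK j hj ε hε.le
      _ = _ := by ring
  calc e k ≤ 2 * h ^ α * K * |ε| * (1 + 2) ^ k :=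
        le_mul_one_add_pow_of_le_add_mul_sum zero_le_two hstep k hk
    _ = 2 * h ^ α * K * 3 ^ k * |ε| := by ring
    _ ≤ 2 * h ^ α * K * 3 ^ N * |ε| := by gcongr; norm_num

/-- **Stability of order 1 of the discrete state variable.** -/
theorem stability_order_one
    (d m N : ℕ) (hd : 1 ≤ d) (hm : 1 ≤ m) (hN : 1 ≤ N)
    (a b : ℝ) (hab : a < b) (α : ℝ) (hα : 0 < α) (hα1 : α ≤ 1)
    (A : Euc d)
    (f : Euc d → Euc m → ℝ → Euc d)
    (hf : ContDiff ℝ 2 fun p : Euc d × Euc m × ℝ => f p.1 p.2.1 p.2.2)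
    (M : ℝ) (hM : 0 ≤ M)
    (hLip : ∀ (x₁ x₂ : Euc d) (v : Euc m), ∀ t ∈ Set.Icc a b,
      ‖f x₁ v t - f x₂ v t‖ ≤ M * ‖x₁ - x₂‖)
    (hMsmall : 2 * ((b - a) / (N : ℝ)) ^ α * M < 1)
    -- `SQ V` is the discrete state variable associated to the discrete control `V`
    (SQ : (ℕ → Euc m) → ℕ → Euc d)
    (hSQ : ∀ V : ℕ → Euc m, SQ V 0 = A ∧ ∀ k, 1 ≤ k → k ≤ N →
      cdMinus α ((b - a) / (N : ℝ)) (SQ V) k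
        = f (SQ V k) (V k) (a + (k : ℝ) * ((b - a) / (N : ℝ))))
    (U Ubar : ℕ → Euc m) :
    ∃ C₁ ≥ (0 : ℝ), ∀ ε : ℝ, |ε| < 1 → ∀ k ≤ N,
      ‖SQ (fun j => U j + ε • Ubar j) k - SQ U k‖ ≤ C₁ * |ε| :=
  stability_order_one_general d m N a b hab α hα hα1 A f hf M hLip hMsmall SQ hSQ U Ubar
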